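/- Let H : [0,∞) → ℝ be a differentiable function satisfying |H(z)| ≤ C·H'(z) for all z ≥ 0, with C > 0. Then either there exists z₀ ≥ 0 with H(z₀) > 0 and H(z) ≥ H(z₀)·exp((z−z₀)/C) for all z ≥ z₀, or H(z) ≤ 0 for all z ≥ 0 and −H(z) ≤ −H(0)·exp(−z/C) for all z ≥ 0. -/

import Mathlib

open Real Set

theorem mul_exp_le_of_mul_le_deriv {f : ℝ → ℝ} {k a : ℝ}
    (hf : ∀ z, a ≤ z → DifferentiableAt ℝ f z) (h : ∀ z, a ≤ z → k * f z ≤ deriv f z)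
    {z : ℝ} (hz : a ≤ z) : f a * exp (k * (z - a)) ≤ f z := by
  have hderiv : ∀ x ∈ Ico a z, HasDerivWithinAt (fun y => -f y) (-deriv f x) (Ici x) x :=
    fun x hx => ((hf x hx.1).hasDerivAt.neg).hasDerivWithinAt
  have hcont : ContinuousOn (fun y => -f y) (Icc a z) :=
    fun x hx => (hf x hx.1).continuousAt.neg.continuousWithinAt
  have hgronwall := le_gronwallBound_of_liminf_deriv_right_le (K := k) (ε := 0) hcont
    (fun x hx _ hr => (hderiv x hx).liminf_right_slope_le hr) le_rfl
    (fun x hx => by linarith [h x hx.1]) z ⟨hz, le_rfl⟩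
  rw [gronwallBound_ε0, neg_mul] at hgronwall
  linarith

/-- The full Phragmén–Lindelöf alternative: from `|H| ≤ C·H'` on `[0,∞)`,
either `H` eventually becomes positive and grows exponentially, or `H` stays
nonpositive and `-H` decays exponentially. -/
theorem phragmen_lindelof_alternative (H : ℝ → ℝ) (C : ℝ) (hC : 0 < C)
    (hdiff : ∀ z, 0 ≤ z → DifferentiableAt ℝ H z)
    (hineq : ∀ z, 0 ≤ z → |H z| ≤ C * deriv H z) :
    (∃ z₀, 0 ≤ z₀ ∧ 0 < H z₀ ∧
        ∀ z, z₀ ≤ z → H z₀ * Real.exp ((z - z₀) / C) ≤ H z) ∨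
      ((∀ z, 0 ≤ z → H z ≤ 0) ∧
        ∀ z, 0 ≤ z → -H z ≤ (-H 0) * Real.exp (-z / C)) := by
  have habs : ∀ z, 0 ≤ z → |H z| / C ≤ deriv H z :=
    fun z hz => (div_le_iff₀' hC).2 (hineq z hz)
  by_cases hpos : ∃ z₀, 0 ≤ z₀ ∧ 0 < H z₀
  · obtain ⟨z₀, hz₀, hHz₀⟩ := hpos
    refine Or.inl ⟨z₀, hz₀, hHz₀, fun z hz => ?_⟩
    have hgrowth : ∀ y, z₀ ≤ y → C⁻¹ * H y ≤ deriv H y := fun y hy => by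
      rw [inv_mul_eq_div]
      exact (div_le_div_of_nonneg_right (le_abs_self _) hC.le).trans (habs y (hz₀.trans hy))
    simpa only [inv_mul_eq_div] using
      mul_exp_le_of_mul_le_deriv (fun y hy => hdiff y (hz₀.trans hy)) hgrowth hz
  · push Not at hpos
    refine Or.inr ⟨hpos, fun z hz => ?_⟩
    have hdecay : ∀ y, 0 ≤ y → -C⁻¹ * H y ≤ deriv H y := fun y hy => by
      rw [neg_mul, ← mul_neg, inv_mul_eq_div]
      exact (div_le_div_of_nonneg_right (neg_le_abs _) hC.le).trans (habs y hy)
    have := mul_exp_le_of_mul_le_deriv hdiff hdecay hz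
    rw [sub_zero, neg_mul, inv_mul_eq_div, ← neg_div] at this
    linarith [neg_mul (H 0) (exp (-z / C))]
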